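/- For a complex vector space V of dimension d and 0 ≤ r ≤ d, the Euler-Poincaré characteristic of the Grassmannian Gr_r(V) of r-dimensional subspaces equals the binomial coefficient C(d, r). -/

import Mathlib

open Module

noncomputable section

/-- The Grassmannian `Gr_r(V)` of `r`-dimensional subspaces of `V`. -/
def GrSpace (r : ℕ) (V : Type) [AddCommGroup V] [Module ℂ V] : Type :=
  {W : Submodule ℂ V // finrank ℂ W = r}

/-- The space of `d × r` complex matrices of full rank `r` (i.e. with linearly independent
columns), with its natural topology. -/
def FullRankMatrices (d r : ℕ) : Type := {A : Matrix (Fin d) (Fin r) ℂ // A.rank = r}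

instance (d r : ℕ) : TopologicalSpace (FullRankMatrices d r) :=
  instTopologicalSpaceSubtype

/-- The natural surjection sending a full-rank `d × r` matrix to the `r`-dimensional
subspace of `V` spanned by its columns (transported along the coordinate
identification `e : V ≃ (Fin d → ℂ)`). -/
def spanColumns (d r : ℕ) (V : Type) [AddCommGroup V] [Module ℂ V]
    (e : V ≃ₗ[ℂ] (Fin d → ℂ)) (A : FullRankMatrices d r) : GrSpace r V :=
  ⟨Submodule.map (e.symm : (Fin d → ℂ) →ₗ[ℂ] V) (LinearMap.range A.1.mulVecLin), by
    rw [LinearEquiv.finrank_map_eq]; exact A.2⟩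

/-- The topology on the Grassmannian `Gr_r(V)`: the quotient topology induced from the
space of full-rank `d × r` matrices. -/
def grTopology (d r : ℕ) (V : Type) [AddCommGroup V] [Module ℂ V]
    (e : V ≃ₗ[ℂ] (Fin d → ℂ)) : TopologicalSpace (GrSpace r V) :=
  TopologicalSpace.coinduced (spanColumns d r V e) inferInstance

open Module Matrix Set

noncomputable section
namespace St18
open scoped Classical



variable {d r : ℕ}

abbrev Mat (d r : ℕ) := Matrix (Fin d) (Fin r) ℂ

/-- Echelon form with pivots `s`. -/
def Ech (s : Fin r ↪o Fin d) (M : Mat d r) : Prop :=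
  (∀ (j : Fin r) (i : Fin d), s j < i → M i j = 0) ∧
  (∀ j' j : Fin r, M (s j') j = if j' = j then 1 else 0)

lemma Ech.submatrix_eq_one {s : Fin r ↪o Fin d} {M : Mat d r} (h : Ech s M) :
    M.submatrix (⇑s) id = 1 := by
  ext j' j
  simp [Matrix.submatrix_apply, h.2 j' j, Matrix.one_apply]

lemma mulVec_apply_pivot {s : Fin r ↪o Fin d} {M : Mat d r} (h : Ech s M)
    (c : Fin r → ℂ) (j : Fin r) : (M *ᵥ c) (s j) = c j := by
  simp only [Matrix.mulVec, dotProduct]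
  rw [Finset.sum_eq_single j]
  · rw [h.2 j j]; simp
  · intro k _ hk; rw [h.2 j k]; simp [Ne.symm hk]
  · simp

lemma Ech.injective {s : Fin r ↪o Fin d} {M : Mat d r} (h : Ech s M) :
    Function.Injective M.mulVecLin := by
  rw [← LinearMap.ker_eq_bot, Submodule.eq_bot_iff]
  intro c hc
  funext j
  have := mulVec_apply_pivot h c j
  rw [show M *ᵥ c = 0 from hc] at this
  simpa using this.symm

lemma Ech.rank_eq {s : Fin r ↪o Fin d} {M : Mat d r} (h : Ech s M) : M.rank = r := by
  rw [Matrix.rank, LinearMap.finrank_range_of_inj h.injective]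
  simp



variable {d r : ℕ}

/-- column j of B as mulVec of single -/
lemma col_eq_mulVec (B : Mat d r) (j : Fin r) :
    (fun i => B i j) = B *ᵥ Pi.single j 1 := by
  funext i
  simp [Matrix.mulVec_single]

lemma exists_factor {A B : Mat d r}
    (h : LinearMap.range B.mulVecLin ≤ LinearMap.range A.mulVecLin) :
    ∃ C : Matrix (Fin r) (Fin r) ℂ, B = A * C := by
  have hc : ∀ j : Fin r, ∃ c : Fin r → ℂ, A *ᵥ c = fun i => B i j := by
    intro j
    have : (fun i => B i j) ∈ LinearMap.range A.mulVecLin := by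
      apply h
      exact ⟨Pi.single j 1, (col_eq_mulVec B j).symm⟩
    obtain ⟨c, hcc⟩ := this
    exact ⟨c, hcc⟩
  choose c hcc using hc
  refine ⟨Matrix.of (fun k j => c j k), ?_⟩
  ext i j
  have := congrFun (hcc j) i
  simp only [Matrix.mulVec, dotProduct] at this
  rw [Matrix.mul_apply, ← this]
  rfl

lemma rank_inj (A : Mat d r) (hA : A.rank = r) : Function.Injective A.mulVecLin := by
  rw [← LinearMap.ker_eq_bot]
  have h1 := A.mulVecLin.finrank_range_add_finrank_ker
  rw [show finrank ℂ (LinearMap.range A.mulVecLin) = r from hA] at h1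
  simp only [Module.finrank_fin_fun] at h1
  have : finrank ℂ (LinearMap.ker A.mulVecLin) = 0 := by omega
  exact Submodule.finrank_eq_zero.mp this

/-- same column span of full-rank matrices ⇒ related by invertible matrix -/
lemma exists_unit_factor {A B : Mat d r} (hA : A.rank = r) (hB : B.rank = r)
    (h : LinearMap.range A.mulVecLin = LinearMap.range B.mulVecLin) :
    ∃ C D : Matrix (Fin r) (Fin r) ℂ, B = A * C ∧ A = B * D ∧ C * D = 1 ∧ D * C = 1 := by
  obtain ⟨C, hC⟩ := exists_factor h.ge
  obtain ⟨D, hD⟩ := exists_factor h.le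
  have hCD : C * D = 1 := by
    have h2 : A * (C * D) = A * (1 : Matrix (Fin r) (Fin r) ℂ) := by
      rw [Matrix.mul_one, ← Matrix.mul_assoc, ← hC, ← hD]
    have h4 : ∀ c : Fin r → ℂ, (C * D) *ᵥ c = (1 : Matrix (Fin r) (Fin r) ℂ) *ᵥ c := by
      intro c
      apply rank_inj A hA
      show A.mulVecLin ((C * D).mulVecLin c) = A.mulVecLin ((1 : Matrix (Fin r) (Fin r) ℂ).mulVecLin c)
      rw [← LinearMap.comp_apply, ← LinearMap.comp_apply, ← Matrix.mulVecLin_mul,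
        ← Matrix.mulVecLin_mul, h2]
    ext i j
    have := congrFun (h4 (Pi.single j 1)) i
    rwa [← col_eq_mulVec, ← col_eq_mulVec] at this
  refine ⟨C, D, hC, hD, hCD, ?_⟩
  exact mul_eq_one_comm.mp hCD

lemma range_mul_le (A : Mat d r) (C : Matrix (Fin r) (Fin r) ℂ) :
    LinearMap.range (A * C).mulVecLin ≤ LinearMap.range A.mulVecLin := by
  rw [Matrix.mulVecLin_mul]
  exact LinearMap.range_comp_le_range _ _

lemma range_mul_unit (A : Mat d r) {C D : Matrix (Fin r) (Fin r) ℂ} (h : C * D = 1) :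
    LinearMap.range (A * C).mulVecLin = LinearMap.range A.mulVecLin := by
  refine le_antisymm (range_mul_le _ _) ?_
  have : A = (A * C) * D := by rw [Matrix.mul_assoc, h, Matrix.mul_one]
  nth_rewrite 1 [this]
  exact range_mul_le _ _



variable {d r : ℕ}

/-- The filtration: vectors supported on coordinates `< i`. -/
def Fsub (d : ℕ) (i : ℕ) : Submodule ℂ (Fin d → ℂ) where
  carrier := {x | ∀ k : Fin d, i ≤ (k : ℕ) → x k = 0}
  add_mem' := fun hx hy k hk => by simp [hx k hk, hy k hk]
  zero_mem' := fun k hk => rfl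
  smul_mem' := fun c x hx k hk => by simp [hx k hk]

lemma Fsub_mono {i j : ℕ} (h : i ≤ j) : Fsub d i ≤ Fsub d j :=
  fun x hx k hk => hx k (le_trans h hk)

lemma Fsub_zero : Fsub d 0 = ⊥ := by
  rw [Submodule.eq_bot_iff]
  intro x hx; funext k; exact hx k (Nat.zero_le _)

lemma Fsub_top (i : ℕ) (h : d ≤ i) : Fsub d i = ⊤ := by
  rw [Submodule.eq_top_iff']
  intro x k hk
  exact absurd (lt_of_lt_of_le k.isLt (le_trans h hk)) (lt_irrefl _)

lemma mem_Fsub_succ_iff {i : Fin d} {x : Fin d → ℂ} :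
    x ∈ Fsub d (i + 1) ↔ (∀ k : Fin d, i < k → x k = 0) := by
  constructor
  · intro h k hk; exact h k hk
  · intro h k hk; exact h k hk

/-- The pivot set of a subspace `W`: coordinates where the filtration dimension jumps. -/
def pivots (W : Submodule ℂ (Fin d → ℂ)) : Finset (Fin d) :=
  Finset.univ.filter (fun i => ∃ x ∈ W ⊓ Fsub d (i + 1), x i ≠ 0)

lemma mem_pivots {W : Submodule ℂ (Fin d → ℂ)} {i : Fin d} :
    i ∈ pivots W ↔ ∃ x ∈ W ⊓ Fsub d (i + 1), x i ≠ 0 := by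
  simp [pivots]


variable {d r : ℕ}

/-- filtration dimension function -/
def fdim (W : Submodule ℂ (Fin d → ℂ)) (i : ℕ) : ℕ := finrank ℂ ↥(W ⊓ Fsub d i)

lemma fdim_mono (W : Submodule ℂ (Fin d → ℂ)) {i j : ℕ} (h : i ≤ j) :
    fdim W i ≤ fdim W j :=
  Submodule.finrank_mono (inf_le_inf_left W (Fsub_mono h))

lemma fdim_succ_le (W : Submodule ℂ (Fin d → ℂ)) (i : Fin d) :
    fdim W ((i : ℕ) + 1) ≤ fdim W i + 1 := by
  set p := W ⊓ Fsub d ((i : ℕ) + 1) with hp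
  set φ : p →ₗ[ℂ] ℂ := (LinearMap.proj i).comp (Submodule.subtype p) with hφ
  have hker : LinearMap.ker φ = Submodule.comap p.subtype (W ⊓ Fsub d i) := by
    ext x
    simp only [LinearMap.mem_ker, hφ, LinearMap.comp_apply, Submodule.subtype_apply,
      LinearMap.proj_apply, Submodule.mem_comap, Submodule.mem_inf]
    constructor
    · intro hx
      refine ⟨x.2.1, fun k hk => ?_⟩
      rcases Nat.lt_or_ge (i : ℕ) (k : ℕ) with h' | h'
      · exact x.2.2 k h'
      · have : (k : ℕ) = (i : ℕ) := le_antisymm h' hk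
        have : k = i := Fin.ext this
        rw [this]; exact hx
    · intro hx
      exact hx.2 i (le_refl _)
  have h1 : finrank ℂ ↥p = finrank ℂ ↥(LinearMap.range φ) + finrank ℂ ↥(LinearMap.ker φ) :=
    (LinearMap.finrank_range_add_finrank_ker φ).symm
  have h2 : finrank ℂ ↥(LinearMap.range φ) ≤ 1 := by
    have := Submodule.finrank_le (LinearMap.range φ)
    simpa using this
  have h3 : finrank ℂ ↥(LinearMap.ker φ) = fdim W i := by
    rw [hker]
    have hle : W ⊓ Fsub d i ≤ p := inf_le_inf_left W (Fsub_mono (Nat.le_succ _))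
    exact LinearEquiv.finrank_eq (Submodule.comapSubtypeEquivOfLe hle)
  rw [fdim, ← hp]
  omega

lemma mem_pivots_iff_fdim {W : Submodule ℂ (Fin d → ℂ)} {i : Fin d} :
    i ∈ pivots W ↔ fdim W i < fdim W ((i : ℕ) + 1) := by
  have hle : W ⊓ Fsub d i ≤ W ⊓ Fsub d ((i : ℕ) + 1) :=
    inf_le_inf_left W (Fsub_mono (Nat.le_succ _))
  rw [mem_pivots]
  constructor
  · rintro ⟨x, hx, hxi⟩
    apply Submodule.finrank_lt_finrank_of_lt
    refine lt_of_le_of_ne hle (fun hEq => ?_)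
    have : x ∈ W ⊓ Fsub d i := hEq ▸ hx
    exact hxi (this.2 i (le_refl _))
  · intro hlt
    by_contra hno
    push_neg at hno
    have hEq : W ⊓ Fsub d i = W ⊓ Fsub d ((i : ℕ) + 1) := by
      refine le_antisymm hle ?_
      rintro x ⟨hxW, hxF⟩
      refine ⟨hxW, fun k hk => ?_⟩
      rcases Nat.lt_or_ge (i : ℕ) (k : ℕ) with h' | h'
      · exact hxF k h'
      · have : k = i := Fin.ext (le_antisymm h' hk)
        rw [this]
        exact hno x ⟨hxW, hxF⟩
    rw [fdim, fdim, hEq] at hlt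
    exact lt_irrefl _ hlt

lemma card_pivots (W : Submodule ℂ (Fin d → ℂ)) (hW : finrank ℂ ↥W = r) :
    (pivots W).card = r := by
  have key : ∀ i : Fin d,
      ((fdim W ((i : ℕ) + 1) : ℤ) - fdim W i) = if i ∈ pivots W then 1 else 0 := by
    intro i
    have h1 := fdim_succ_le W i
    have h2 : fdim W (i : ℕ) ≤ fdim W ((i : ℕ) + 1) := fdim_mono W (by omega)
    by_cases h : i ∈ pivots W
    · have := mem_pivots_iff_fdim.mp h
      simp only [h, if_true]
      omega
    · have := mem_pivots_iff_fdim.not.mp h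
      simp only [h, if_false]
      omega
  have hsum : ∑ i : Fin d, ((fdim W ((i : ℕ) + 1) : ℤ) - fdim W i)
      = ∑ i : Fin d, (if i ∈ pivots W then (1 : ℤ) else 0) := by
    exact Finset.sum_congr rfl (fun i _ => key i)
  have hl : ∑ i : Fin d, ((fdim W ((i : ℕ) + 1) : ℤ) - fdim W i) = (r : ℤ) := by
    rw [Fin.sum_univ_eq_sum_range (fun i => ((fdim W (i + 1) : ℤ) - fdim W i)) d]
    rw [Finset.sum_range_sub (fun i => (fdim W i : ℤ))]
    have h0 : fdim W 0 = 0 := by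
      rw [fdim, Fsub_zero, inf_bot_eq]
      simp
    have hd : fdim W d = r := by
      rw [fdim, Fsub_top d (le_refl _), inf_top_eq, hW]
    rw [h0, hd]
    simp
  have hrr : ∑ i : Fin d, (if i ∈ pivots W then (1 : ℤ) else 0) = ((pivots W).card : ℤ) := by
    rw [Finset.sum_ite_mem, Finset.univ_inter, Finset.sum_const]
    simp
  have hfin : ((pivots W).card : ℤ) = (r : ℤ) := by rw [← hrr, ← hsum, hl]
  exact_mod_cast hfin

end St18

namespace St18
open scoped Classical
variable {d r : ℕ}

lemma pivots_of_ech {s : Fin r ↪o Fin d} {M : Mat d r} (h : Ech s M) :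
    (pivots (LinearMap.range M.mulVecLin) : Set (Fin d)) = Set.range ⇑s := by
  ext i
  simp only [Finset.coe_filter, Set.mem_setOf_eq, Set.mem_range, Finset.mem_coe, mem_pivots]
  constructor
  · rintro ⟨x, ⟨⟨c, hc⟩, hxF⟩, hxi⟩
    rw [Matrix.mulVecLin_apply] at hc
    by_contra hns
    push_neg at hns
    -- c j = 0 whenever i < s j
    have hc0 : ∀ j : Fin r, i < s j → c j = 0 := by
      intro j hj
      have h1 : (M *ᵥ c) (s j) = c j := mulVec_apply_pivot h c j
      rw [hc] at h1
      rw [← h1]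
      exact hxF (s j) (by exact_mod_cast hj)
    have : x i = 0 := by
      rw [← hc]
      simp only [Matrix.mulVec, dotProduct]
      apply Finset.sum_eq_zero
      intro j _
      rcases lt_trichotomy i (s j) with h' | h' | h'
      · rw [hc0 j h', mul_zero]
      · exact absurd h'.symm (hns j)
      · rw [h.1 j i h', zero_mul]
    exact hxi this
  · rintro ⟨j, rfl⟩
    refine ⟨M *ᵥ Pi.single j 1, ⟨⟨Pi.single j 1, rfl⟩, ?_⟩, ?_⟩
    · intro k hk
      have hk' : s j < k := by exact_mod_cast hk
      rw [← col_eq_mulVec]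
      exact h.1 j k hk'
    · rw [mulVec_apply_pivot h]
      simp

lemma ech_unique {s : Fin r ↪o Fin d} {M M' : Mat d r} (hM : Ech s M) (hM' : Ech s M')
    (hr : LinearMap.range M.mulVecLin = LinearMap.range M'.mulVecLin) : M = M' := by
  ext i j
  have hcol : (fun i => M' i j) ∈ LinearMap.range M.mulVecLin := by
    rw [hr, col_eq_mulVec]
    exact ⟨Pi.single j 1, rfl⟩
  obtain ⟨c, hc⟩ := hcol
  rw [Matrix.mulVecLin_apply] at hc
  have hcval : ∀ k : Fin r, c k = if k = j then 1 else 0 := by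
    intro k
    have := mulVec_apply_pivot hM c k
    rw [hc] at this
    simp only [] at this
    rw [← this]
    exact hM'.2 k j
  have : c = Pi.single j 1 := by
    funext k
    rw [hcval k]
    by_cases hkj : k = j <;> simp [hkj, Pi.single_apply]
  rw [this] at hc
  have h5 := congrFun hc i
  rw [← col_eq_mulVec] at h5
  simpa using h5

end St18

namespace St18
open scoped Classical
variable {d r : ℕ}

lemma ech_exists (W : Submodule ℂ (Fin d → ℂ)) (hW : finrank ℂ ↥W = r)
    (s : Fin r ↪o Fin d) (hs : Set.range ⇑s = ↑(pivots W)) :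
    ∃ M : Mat d r, Ech s M ∧ LinearMap.range M.mulVecLin = W := by
  have hw : ∀ j : Fin r, ∃ v : Fin d → ℂ,
      v ∈ W ∧ (∀ k : Fin d, ((s j : ℕ) + 1 : ℕ) ≤ (k : ℕ) → v k = 0) ∧ v (s j) = 1 := by
    intro j
    have hmem : s j ∈ pivots W := by
      rw [← Finset.mem_coe, ← hs]; exact ⟨j, rfl⟩
    obtain ⟨x, ⟨hxW, hxF⟩, hxi⟩ := mem_pivots.mp hmem
    refine ⟨(x (s j))⁻¹ • x, W.smul_mem _ hxW, ?_, ?_⟩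
    · intro k hk
      have : x k = 0 := hxF k hk
      simp [this]
    · simp [inv_mul_cancel₀ hxi]
  choose w hwW hwF hw1 using hw
  set A : Mat d r := Matrix.of (fun i j => w j i) with hA
  set AS : Matrix (Fin r) (Fin r) ℂ := A.submatrix (⇑s) id with hAS
  have hASapp : ∀ j k, AS j k = w k (s j) := fun j k => rfl
  have htri : AS.BlockTriangular id := by
    intro j k hk
    rw [hASapp]
    exact hwF k (s j) (by
      have : s k < s j := s.strictMono hk
      exact_mod_cast this)
  have hdiag : ∀ j, AS j j = 1 := fun j => hw1 j
  have hdet : AS.det = 1 := by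
    rw [Matrix.det_of_upperTriangular htri]
    simp [hdiag]
  have hdetu : IsUnit AS.det := by rw [hdet]; exact isUnit_one
  have hASinv : AS * AS⁻¹ = 1 := Matrix.mul_nonsing_inv _ hdetu
  have : Invertible AS := AS.invertibleOfIsUnitDet hdetu
  have hBtri : (AS⁻¹).BlockTriangular id := Matrix.blockTriangular_inv_of_blockTriangular htri
  set M : Mat d r := A * AS⁻¹ with hM
  have hsub : M.submatrix (⇑s) id = AS * AS⁻¹ := by
    ext j k
    simp [hM, Matrix.mul_apply, Matrix.submatrix_apply, hAS]
  have hsub1 : M.submatrix (⇑s) id = 1 := hsub.trans hASinv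
  have hech : Ech s M := by
    constructor
    · intro j i hij
      rw [hM]
      rw [Matrix.mul_apply]
      apply Finset.sum_eq_zero
      intro k _
      by_cases hkj : j < k
      · rw [hBtri hkj, mul_zero]
      · push_neg at hkj
        have h1 : A i k = 0 := by
          apply hwF k i
          have : s k ≤ s j := s.monotone hkj
          have h2 : (s k : ℕ) < (i : ℕ) := lt_of_le_of_lt (by exact_mod_cast this) (by exact_mod_cast hij)
          omega
        rw [h1, zero_mul]
    · intro j' j
      have h6 := congrFun (congrFun hsub1 j') j
      rw [Matrix.submatrix_apply] at h6
      simp only [id_eq] at h6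
      rw [h6, Matrix.one_apply]
  have hAmem : ∀ v : Fin r → ℂ, A *ᵥ v ∈ W := by
    intro v
    have hAv : A *ᵥ v = ∑ k : Fin r, v k • w k := by
      funext i
      rw [Finset.sum_apply]
      simp only [Matrix.mulVec, dotProduct, Pi.smul_apply, smul_eq_mul]
      exact Finset.sum_congr rfl (fun k _ => mul_comm _ _)
    rw [hAv]
    exact Submodule.sum_mem W (fun k _ => W.smul_mem _ (hwW k))
  have hle : LinearMap.range M.mulVecLin ≤ W := by
    rintro x ⟨c, rfl⟩
    rw [Matrix.mulVecLin_apply, hM, ← Matrix.mulVec_mulVec]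
    exact hAmem _
  have hfr : finrank ℂ ↥(LinearMap.range M.mulVecLin) = r := hech.rank_eq
  refine ⟨M, hech, Submodule.eq_of_le_of_finrank_eq hle ?_⟩
  rw [hfr, hW]

end St18

namespace St18
open scoped Classical
variable {d r : ℕ}

/-- echelon matrices as a set of matrices -/
def Zset (s : Fin r ↪o Fin d) : Set (Mat d r) := {M | Ech s M}

lemma Zset_closed (s : Fin r ↪o Fin d) : IsClosed (Zset s) := by
  have : Zset s = (⋂ (j : Fin r) (i : Fin d) (_ : s j < i), {M : Mat d r | M i j = 0}) ∩
      (⋂ (j' : Fin r) (j : Fin r), {M : Mat d r | M (s j') j = if j' = j then 1 else 0}) := by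
    ext M
    simp only [Zset, Set.mem_inter_iff, Set.mem_iInter, Set.mem_setOf_eq, Ech]
  rw [this]
  have hc : ∀ (i : Fin d) (j : Fin r) (a : ℂ), IsClosed {M : Mat d r | M i j = a} := by
    intro i j a
    have : Continuous (fun M : Mat d r => M i j) :=
      (continuous_apply j).comp (continuous_apply i)
    exact isClosed_singleton.preimage this
  exact ((isClosed_iInter fun j => isClosed_iInter fun i => isClosed_iInter fun _ => hc i j 0).inter
    (isClosed_iInter fun j' => isClosed_iInter fun j => hc (s j') j _))

def toFRM {s : Fin r ↪o Fin d} (M : ↥(Zset s)) : FullRankMatrices d r :=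
  ⟨M.1, M.2.rank_eq⟩

/-- the chart set: matrices whose pivot-rows submatrix is invertible -/
def Omat (s : Fin r ↪o Fin d) : Set (Mat d r) := {A | IsUnit (A.submatrix (⇑s) id).det}

def Oset (s : Fin r ↪o Fin d) : Set (FullRankMatrices d r) := Subtype.val ⁻¹' (Omat s)

lemma Omat_open (s : Fin r ↪o Fin d) : IsOpen (Omat s) := by
  have hc : Continuous (fun A : Mat d r => (A.submatrix (⇑s) id).det) :=
    (continuous_id.matrix_submatrix (⇑s) id).matrix_det
  have : Omat s = (fun A : Mat d r => (A.submatrix (⇑s) id).det) ⁻¹' {x | x ≠ 0} := by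
    ext A; simp [Omat, isUnit_iff_ne_zero]
  rw [this]
  exact (isOpen_ne).preimage hc

lemma Oset_open (s : Fin r ↪o Fin d) : IsOpen (Oset s) :=
  (Omat_open s).preimage continuous_subtype_val

/-- the column reduction map -/
def rho (s : Fin r ↪o Fin d) (A : Mat d r) : Mat d r := A * (A.submatrix (⇑s) id)⁻¹

lemma rho_continuousOn (s : Fin r ↪o Fin d) : ContinuousOn (rho s) (Omat s) := by
  rw [continuousOn_iff_continuous_restrict]
  have h1 : Continuous (fun A : ↥(Omat s) => (A.1 : Mat d r)) := continuous_subtype_val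
  have h2 : Continuous (fun A : ↥(Omat s) => A.1.submatrix (⇑s) id) :=
    h1.matrix_submatrix (⇑s) id
  have h3 : Continuous (fun A : ↥(Omat s) => (A.1.submatrix (⇑s) id).det) := h2.matrix_det
  have h4 : Continuous (fun A : ↥(Omat s) => ((A.1.submatrix (⇑s) id).det)⁻¹) := by
    apply ContinuousOn.comp_continuous (continuousOn_inv₀) h3
    intro A
    have := A.2
    simp only [Omat, Set.mem_setOf_eq, isUnit_iff_ne_zero] at this
    simpa using this
  have h5 : Continuous (fun A : ↥(Omat s) => (A.1.submatrix (⇑s) id).adjugate) :=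
    h2.matrix_adjugate
  have h6 : Continuous (fun A : ↥(Omat s) =>
      ((A.1.submatrix (⇑s) id).det)⁻¹ • (A.1.submatrix (⇑s) id).adjugate) := h4.smul h5
  have h7 : Continuous (fun A : ↥(Omat s) =>
      A.1 * (((A.1.submatrix (⇑s) id).det)⁻¹ • (A.1.submatrix (⇑s) id).adjugate)) :=
    h1.matrix_mul h6
  have heq : (Set.restrict (Omat s) (rho s)) = (fun A : ↥(Omat s) =>
      A.1 * (((A.1.submatrix (⇑s) id).det)⁻¹ • (A.1.submatrix (⇑s) id).adjugate)) := by
    funext A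
    show rho s A.1 = _
    rw [rho, Matrix.inv_def, Ring.inverse_eq_inv]
  change Continuous ((Omat s).restrict (rho s))
  rw [heq]
  exact h7

end St18

namespace St18
open scoped Classical
variable {d r : ℕ}

lemma mem_Omat_of_ech {s : Fin r ↪o Fin d} {M : Mat d r} (h : Ech s M) : M ∈ Omat s := by
  rw [Omat, Set.mem_setOf_eq, h.submatrix_eq_one]
  simp

lemma submatrix_mul_right (A : Mat d r) (C : Matrix (Fin r) (Fin r) ℂ) (s : Fin r ↪o Fin d) :
    (A * C).submatrix (⇑s) id = A.submatrix (⇑s) id * C := by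
  ext j k
  simp [Matrix.mul_apply, Matrix.submatrix_apply]

lemma rho_welldef {s : Fin r ↪o Fin d} {A B : Mat d r} (hA : A.rank = r) (hB : B.rank = r)
    (hAO : A ∈ Omat s)
    (h : LinearMap.range A.mulVecLin = LinearMap.range B.mulVecLin) :
    B ∈ Omat s ∧ rho s B = rho s A := by
  obtain ⟨C, D, hC, hD, hCD, hDC⟩ := exists_unit_factor hA hB h
  have hBS : B.submatrix (⇑s) id = A.submatrix (⇑s) id * C := by
    rw [hC]; exact submatrix_mul_right A C s
  have hCu : IsUnit C.det :=
    IsUnit.of_mul_eq_one D.det (by rw [← Matrix.det_mul, hCD, Matrix.det_one])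
  have hBO : B ∈ Omat s := by
    rw [Omat, Set.mem_setOf_eq, hBS, Matrix.det_mul]
    exact (hAO).mul hCu
  refine ⟨hBO, ?_⟩
  rw [rho, rho, hBS, Matrix.mul_inv_rev, hC]
  rw [Matrix.mul_assoc, ← Matrix.mul_assoc C C⁻¹, Matrix.mul_nonsing_inv _ hCu,
    Matrix.one_mul]

lemma rho_range {s : Fin r ↪o Fin d} {A : Mat d r} (hAO : A ∈ Omat s) :
    LinearMap.range (rho s A).mulVecLin = LinearMap.range A.mulVecLin :=
  range_mul_unit A (Matrix.nonsing_inv_mul _ hAO)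

lemma rho_rank {s : Fin r ↪o Fin d} {A : Mat d r} (hA : A.rank = r) (hAO : A ∈ Omat s) :
    (rho s A).rank = r := by
  have h1 : (rho s A).rank = finrank ℂ ↥(LinearMap.range (rho s A).mulVecLin) := rfl
  rw [h1, rho_range hAO]
  exact hA

lemma rho_ech_fix {s : Fin r ↪o Fin d} {M : Mat d r} (h : Ech s M) : rho s M = M := by
  rw [rho, h.submatrix_eq_one, inv_one, Matrix.mul_one]

lemma rho_of_rep {s : Fin r ↪o Fin d} {A : Mat d r} (hA : A.rank = r)
    {M : Mat d r} (hM : Ech s M)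
    (h : LinearMap.range M.mulVecLin = LinearMap.range A.mulVecLin) : rho s A = M := by
  obtain ⟨C, D, hC, hD, hCD, hDC⟩ := exists_unit_factor hA hM.rank_eq h.symm
  have hMS : M.submatrix (⇑s) id = A.submatrix (⇑s) id * C := by
    rw [hC]; exact submatrix_mul_right A C s
  have hone : A.submatrix (⇑s) id * C = 1 := by rw [← hMS, hM.submatrix_eq_one]
  have : (A.submatrix (⇑s) id)⁻¹ = C := Matrix.inv_eq_right_inv hone
  rw [rho, this, ← hC]

end St18

namespace St18
open scoped Classical
variable {d r : ℕ} {V : Type} [AddCommGroup V] [Module ℂ V]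

lemma q_eq_iff (e : V ≃ₗ[ℂ] (Fin d → ℂ)) (A B : FullRankMatrices d r) :
    spanColumns d r V e A = spanColumns d r V e B ↔
      LinearMap.range A.1.mulVecLin = LinearMap.range B.1.mulVecLin := by
  rw [spanColumns, spanColumns]; erw [Subtype.mk.injEq]
  constructor
  · intro h
    exact Submodule.map_injective_of_injective (e.symm.injective) h
  · intro h
    rw [h]

/-- saturation w.r.t. the span fibers -/
def Sat (Ω : Set (FullRankMatrices d r)) : Prop :=
  ∀ A B : FullRankMatrices d r,
    LinearMap.range A.1.mulVecLin = LinearMap.range B.1.mulVecLin → A ∈ Ω → B ∈ Ω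

lemma isOpen_gr_iff (e : V ≃ₗ[ℂ] (Fin d → ℂ)) (U : Set (GrSpace r V)) :
    @IsOpen _ (grTopology d r V e) U ↔ IsOpen (spanColumns d r V e ⁻¹' U) :=
  isOpen_coinduced

lemma preimage_image_of_sat (e : V ≃ₗ[ℂ] (Fin d → ℂ)) {Ω : Set (FullRankMatrices d r)}
    (hsat : Sat Ω) : spanColumns d r V e ⁻¹' (spanColumns d r V e '' Ω) = Ω := by
  ext A
  simp only [Set.mem_preimage, Set.mem_image]
  constructor
  · rintro ⟨B, hB, hBA⟩
    exact hsat B A ((q_eq_iff e B A).mp hBA) hB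
  · intro hA
    exact ⟨A, hA, rfl⟩

lemma isOpen_q_image (e : V ≃ₗ[ℂ] (Fin d → ℂ)) {Ω : Set (FullRankMatrices d r)}
    (hsat : Sat Ω) (hopen : IsOpen Ω) :
    @IsOpen _ (grTopology d r V e) (spanColumns d r V e '' Ω) := by
  rw [isOpen_gr_iff, preimage_image_of_sat e hsat]
  exact hopen

lemma continuous_q (e : V ≃ₗ[ℂ] (Fin d → ℂ)) :
    @Continuous _ _ _ (grTopology d r V e) (spanColumns d r V e) :=
  continuous_coinduced_rng

end St18

namespace St18
open scoped Classical
variable {d r : ℕ} {V : Type} [AddCommGroup V] [Module ℂ V]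

/-- echelon full-rank matrices -/
def ZF (s : Fin r ↪o Fin d) : Set (FullRankMatrices d r) := {A | Ech s A.1}

/-- the Schubert cell -/
def Cset (e : V ≃ₗ[ℂ] (Fin d → ℂ)) (s : Fin r ↪o Fin d) : Set (GrSpace r V) :=
  spanColumns d r V e '' ZF s

/-- the saturated preimage description of the cell -/
def KF (s : Fin r ↪o Fin d) : Set (FullRankMatrices d r) :=
  {A | A.1 ∈ Omat s ∧ rho s A.1 ∈ Zset s}

def KcF (s : Fin r ↪o Fin d) : Set (FullRankMatrices d r) :=
  {A | A.1 ∈ Omat s ∧ rho s A.1 ∉ Zset s}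

lemma sat_Oset (s : Fin r ↪o Fin d) : Sat (Oset s) := by
  intro A B h hA
  exact (rho_welldef A.2 B.2 hA h).1

lemma sat_KF (s : Fin r ↪o Fin d) : Sat (KF s) := by
  rintro A B h ⟨hA, hAZ⟩
  obtain ⟨hB, hrho⟩ := rho_welldef A.2 B.2 hA h
  exact ⟨hB, hrho ▸ hAZ⟩

lemma sat_KcF (s : Fin r ↪o Fin d) : Sat (KcF s) := by
  rintro A B h ⟨hA, hAZ⟩
  obtain ⟨hB, hrho⟩ := rho_welldef A.2 B.2 hA h
  exact ⟨hB, hrho ▸ hAZ⟩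

lemma open_KcF (s : Fin r ↪o Fin d) : IsOpen (KcF s) := by
  have h1 : IsOpen (Omat s ∩ rho s ⁻¹' (Zset s)ᶜ) :=
    (rho_continuousOn s).isOpen_inter_preimage (Omat_open s) (Zset_closed s).isOpen_compl
  have h2 : KcF s = Subtype.val ⁻¹' (Omat s ∩ rho s ⁻¹' (Zset s)ᶜ) := rfl
  rw [h2]
  exact h1.preimage continuous_subtype_val

lemma open_satKU (s : Fin r ↪o Fin d) (U : Set (Mat d r)) (hU : IsOpen U) :
    IsOpen {A : FullRankMatrices d r | A.1 ∈ Omat s ∧ rho s A.1 ∈ U} ∧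
      Sat {A : FullRankMatrices d r | A.1 ∈ Omat s ∧ rho s A.1 ∈ U} := by
  constructor
  · have h1 : IsOpen (Omat s ∩ rho s ⁻¹' U) :=
      (rho_continuousOn s).isOpen_inter_preimage (Omat_open s) hU
    exact h1.preimage continuous_subtype_val
  · rintro A B h ⟨hA, hAU⟩
    obtain ⟨hB, hrho⟩ := rho_welldef A.2 B.2 hA h
    exact ⟨hB, hrho ▸ hAU⟩

lemma preimage_Cset (e : V ≃ₗ[ℂ] (Fin d → ℂ)) (s : Fin r ↪o Fin d) :
    spanColumns d r V e ⁻¹' (Cset e s) = KF s := by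
  ext A
  simp only [Set.mem_preimage, Cset, Set.mem_image, KF, Set.mem_setOf_eq]
  constructor
  · rintro ⟨B, hB, hBA⟩
    have hrange := (q_eq_iff e B A).mp hBA
    obtain ⟨hAO, -⟩ := rho_welldef ((hB : Ech s B.1).rank_eq) A.2 (mem_Omat_of_ech hB) hrange
    refine ⟨hAO, ?_⟩
    rw [rho_of_rep A.2 hB hrange]
    exact hB
  · rintro ⟨hAO, hAZ⟩
    refine ⟨⟨rho s A.1, rho_rank A.2 hAO⟩, hAZ, ?_⟩
    apply (q_eq_iff e _ _).mpr
    exact rho_range hAO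

lemma Cset_subset_O (e : V ≃ₗ[ℂ] (Fin d → ℂ)) (s : Fin r ↪o Fin d) :
    Cset e s ⊆ spanColumns d r V e '' Oset s :=
  Set.image_mono (fun A hA => mem_Omat_of_ech hA)

lemma Cset_locallyClosed (e : V ≃ₗ[ℂ] (Fin d → ℂ)) (s : Fin r ↪o Fin d) :
    @IsLocallyClosed _ (grTopology d r V e) (Cset e s) := by
  letI := grTopology d r V e
  refine ⟨spanColumns d r V e '' Oset s, (spanColumns d r V e '' KcF s)ᶜ,
    isOpen_q_image e (sat_Oset s) (Oset_open s), ?_, ?_⟩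
  · exact (isOpen_q_image e (sat_KcF s) (open_KcF s)).isClosed_compl
  · ext x
    simp only [Set.mem_inter_iff, Set.mem_compl_iff]
    constructor
    · intro hx
      refine ⟨Cset_subset_O e s hx, ?_⟩
      rintro ⟨A, hAK, hAx⟩
      have : A ∈ spanColumns d r V e ⁻¹' (Cset e s) := by
        rw [Set.mem_preimage, hAx]; exact hx
      rw [preimage_Cset] at this
      exact hAK.2 this.2
    · rintro ⟨⟨A, hAO, hAx⟩, hxc⟩
      have hAZ : rho s A.1 ∈ Zset s := by
        by_contra hn
        exact hxc ⟨A, ⟨hAO, hn⟩, hAx⟩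
      have : A ∈ spanColumns d r V e ⁻¹' (Cset e s) := by
        rw [preimage_Cset]; exact ⟨hAO, hAZ⟩
      rw [Set.mem_preimage, hAx] at this
      exact this

end St18

namespace St18
open scoped Classical
variable {d r : ℕ} {V : Type} [AddCommGroup V] [Module ℂ V]

lemma cell_homeo (e : V ≃ₗ[ℂ] (Fin d → ℂ)) (s : Fin r ↪o Fin d) :
    Nonempty (@Homeomorph ↥(Cset e s) ↥(Zset s)
      (@instTopologicalSpaceSubtype _ _ (grTopology d r V e)) _) := by
  letI := grTopology d r V e
  have hrep : ∀ x : ↥(Cset e s), ∃ A : FullRankMatrices d r,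
      (A.1 ∈ Omat s ∧ rho s A.1 ∈ Zset s) ∧ spanColumns d r V e A = x.1 := by
    intro x
    obtain ⟨B, hB, hBx⟩ := x.2
    have : B ∈ spanColumns d r V e ⁻¹' (Cset e s) := by
      rw [Set.mem_preimage, hBx]; exact x.2
    rw [preimage_Cset] at this
    exact ⟨B, this, hBx⟩
  set rep : ↥(Cset e s) → FullRankMatrices d r := fun x => (hrep x).choose with hrepdef
  have hrep1 : ∀ x, (rep x).1 ∈ Omat s := fun x => (hrep x).choose_spec.1.1
  have hrep2 : ∀ x, rho s (rep x).1 ∈ Zset s := fun x => (hrep x).choose_spec.1.2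
  have hrep3 : ∀ x, spanColumns d r V e (rep x) = x.1 := fun x => (hrep x).choose_spec.2
  set Fmat : ↥(Cset e s) → Mat d r := fun x => rho s (rep x).1 with hFmat
  -- key: Fmat is computed by rho on any representative
  have hFmat_rep : ∀ (x : ↥(Cset e s)) (A : FullRankMatrices d r), A.1 ∈ Omat s →
      spanColumns d r V e A = x.1 → Fmat x = rho s A.1 := by
    intro x A hAO hAx
    have hq : spanColumns d r V e A = spanColumns d r V e (rep x) := by
      rw [hAx, hrep3]
    have hrange := (q_eq_iff e A (rep x)).mp hq
    exact ((rho_welldef A.2 (rep x).2 hAO hrange).2).symm ▸ rfl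
  have hFmat_cont : Continuous Fmat := by
    rw [continuous_def]
    intro U hU
    obtain ⟨hSopen, hSsat⟩ := open_satKU s U hU
    have hkey : Fmat ⁻¹' U =
        Subtype.val ⁻¹' (spanColumns d r V e '' {A | A.1 ∈ Omat s ∧ rho s A.1 ∈ U}) := by
      ext x
      simp only [Set.mem_preimage, Set.mem_image, Set.mem_setOf_eq]
      constructor
      · intro hx
        exact ⟨rep x, ⟨hrep1 x, hx⟩, hrep3 x⟩
      · rintro ⟨A, ⟨hAO, hAU⟩, hAx⟩
        rw [hFmat_rep x A hAO hAx]
        exact hAU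
    rw [hkey]
    exact (isOpen_q_image e hSsat hSopen).preimage continuous_subtype_val
  set F : ↥(Cset e s) → ↥(Zset s) := fun x => ⟨Fmat x, hrep2 x⟩ with hF
  set G : ↥(Zset s) → ↥(Cset e s) := fun M =>
    ⟨spanColumns d r V e (toFRM M), ⟨toFRM M, M.2, rfl⟩⟩ with hG
  have hGF : ∀ x, G (F x) = x := by
    intro x
    apply Subtype.ext
    show spanColumns d r V e (toFRM (F x)) = x.1
    have : spanColumns d r V e (toFRM (F x)) = spanColumns d r V e (rep x) := by
      rw [q_eq_iff]
      exact rho_range (hrep1 x)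
    rw [this, hrep3]
  have hFG : ∀ M, F (G M) = M := by
    intro M
    apply Subtype.ext
    show Fmat (G M) = M.1
    have h1 : Fmat (G M) = rho s (toFRM M).1 :=
      hFmat_rep (G M) (toFRM M) (mem_Omat_of_ech M.2) rfl
    rw [h1]
    exact rho_ech_fix M.2
  have hGcont : Continuous G := by
    apply Continuous.subtype_mk
    apply (continuous_q e).comp
    exact Continuous.subtype_mk continuous_subtype_val _
  exact ⟨⟨⟨F, G, hGF, hFG⟩, hFmat_cont.subtype_mk _, hGcont⟩⟩

end St18

namespace St18
open scoped Classical
variable {d r : ℕ}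

def Tset (s : Fin r ↪o Fin d) : Type :=
  {p : Fin d × Fin r // p.1 ∉ Set.range ⇑s ∧ p.1 < s p.2}

instance (s : Fin r ↪o Fin d) : Finite (Tset s) :=
  Subtype.finite

def mdim (s : Fin r ↪o Fin d) : ℕ := Nat.card (Tset s)

def buildM (s : Fin r ↪o Fin d) (u : Tset s → ℂ) : Mat d r :=
  Matrix.of fun i j =>
    if h : (i ∉ Set.range ⇑s ∧ i < s j) then u ⟨(i, j), h⟩
    else if i = s j then 1 else 0

lemma buildM_ech (s : Fin r ↪o Fin d) (u : Tset s → ℂ) : Ech s (buildM s u) := by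
  constructor
  · intro j i hij
    rw [buildM]
    show (if h : (i ∉ Set.range ⇑s ∧ i < s j) then u ⟨(i, j), h⟩
      else if i = s j then 1 else 0) = 0
    rw [dif_neg, if_neg]
    · intro hcon; rw [hcon] at hij; exact lt_irrefl _ hij
    · rintro ⟨-, hlt⟩; exact absurd (lt_trans hij hlt) (lt_irrefl _)
  · intro j' j
    rw [buildM]
    show (if h : (s j' ∉ Set.range ⇑s ∧ s j' < s j) then u ⟨(s j', j), h⟩
      else if s j' = s j then 1 else 0) = if j' = j then 1 else 0
    rw [dif_neg]
    · congr 1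
      simp only [eq_iff_iff]
      exact ⟨fun h => s.injective h, fun h => h ▸ rfl⟩
    · rintro ⟨hn, -⟩; exact hn ⟨j', rfl⟩

lemma zset_homeo (s : Fin r ↪o Fin d) :
    Nonempty (↥(Zset s) ≃ₜ (Fin (mdim s) → ℂ)) := by
  haveI : Fintype (Tset s) := Fintype.ofFinite _
  set F1 : ↥(Zset s) → (Tset s → ℂ) := fun M t => M.1 t.1.1 t.1.2 with hF1
  set G1 : (Tset s → ℂ) → ↥(Zset s) := fun u => ⟨buildM s u, buildM_ech s u⟩ with hG1
  have hFG : ∀ u, F1 (G1 u) = u := by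
    intro u
    funext t
    show buildM s u t.1.1 t.1.2 = u t
    rw [buildM]
    show (if h : _ then u ⟨(t.1.1, t.1.2), h⟩ else _) = u t
    rw [dif_pos t.2]
    congr
  have hGF : ∀ M, G1 (F1 M) = M := by
    intro M
    apply Subtype.ext
    show buildM s (F1 M) = M.1
    ext i j
    rw [buildM]
    show (if h : (i ∉ Set.range ⇑s ∧ i < s j) then M.1 i j else if i = s j then 1 else 0)
      = M.1 i j
    by_cases h : (i ∉ Set.range ⇑s ∧ i < s j)
    · rw [dif_pos h]
    · rw [dif_neg h]
      by_cases he : i = s j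
      · rw [if_pos he, he]
        have := M.2.2 j j
        simp only [if_pos rfl] at this
        exact this.symm
      · rw [if_neg he]
        push_neg at h
        by_cases hir : i ∈ Set.range ⇑s
        · obtain ⟨j', rfl⟩ := hir
          have := M.2.2 j' j
          have hne : ¬ (j' = j) := fun hc => he (by rw [hc])
          rw [if_neg hne] at this
          exact this.symm
        · have hlt : s j < i := by
            rcases lt_trichotomy i (s j) with h1 | h1 | h1
            · exact absurd h1 (not_lt_of_ge (h hir))
            · exact absurd h1 he
            · exact h1
          exact (M.2.1 j i hlt).symm
  have hF1c : Continuous F1 := by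
    apply continuous_pi
    intro t
    exact (continuous_apply t.1.2).comp ((continuous_apply t.1.1).comp continuous_subtype_val)
  have hG1c : Continuous G1 := by
    apply Continuous.subtype_mk
    apply continuous_pi; intro i
    apply continuous_pi; intro j
    show Continuous fun u : Tset s → ℂ =>
      (if h : (i ∉ Set.range ⇑s ∧ i < s j) then u ⟨(i, j), h⟩ else if i = s j then 1 else 0)
    by_cases h : (i ∉ Set.range ⇑s ∧ i < s j)
    · simp only [dif_pos h]
      exact continuous_apply _
    · simp only [dif_neg h]
      exact continuous_const
  have h1 : ↥(Zset s) ≃ₜ (Tset s → ℂ) := ⟨⟨F1, G1, hGF, hFG⟩, hF1c, hG1c⟩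
  have h2 : (Tset s → ℂ) ≃ₜ (Fin (mdim s) → ℂ) := by
    have eqv : Tset s ≃ Fin (mdim s) := Finite.equivFin (Tset s)
    exact Homeomorph.piCongrLeft (Y := fun _ => ℂ) eqv
  exact ⟨h1.trans h2⟩

end St18

namespace St18
open scoped Classical
variable {d r : ℕ} {V : Type} [AddCommGroup V] [Module ℂ V]

lemma map_symm_map (e : V ≃ₗ[ℂ] (Fin d → ℂ)) (p : Submodule ℂ V) :
    Submodule.map (e.symm : (Fin d → ℂ) →ₗ[ℂ] V)
      (Submodule.map (e : V →ₗ[ℂ] (Fin d → ℂ)) p) = p := by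
  ext z
  simp only [Submodule.mem_map]
  constructor
  · rintro ⟨y, ⟨w, hw, rfl⟩, rfl⟩
    simpa using hw
  · intro hz
    exact ⟨e z, ⟨z, hz, rfl⟩, by simp⟩

end St18


/-- For a complex vector space `V` of dimension `d` and `0 ≤ r ≤ d`, any Euler–Poincaré
characteristic `χ` — i.e. any assignment of integers to topological spaces such that
`χ = 1` on spaces homeomorphic to a finite-dimensional complex affine space, and `χ` is
additive over finite partitions into locally closed subsets (as happens for the Schubert
cell decomposition) — satisfies `χ(Gr_r(V)) = C(d, r)`. -/
theorem stmt18 (d r : ℕ) (hr : r ≤ d) (V : Type) [AddCommGroup V] [Module ℂ V]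
    (e : V ≃ₗ[ℂ] (Fin d → ℂ))
    (χ : (X : Type) → TopologicalSpace X → ℤ)
    (hcell : ∀ (X : Type) (t : TopologicalSpace X) (m : ℕ),
      Nonempty (@Homeomorph X (Fin m → ℂ) t inferInstance) → χ X t = 1)
    (hadd : ∀ (X : Type) (t : TopologicalSpace X) (N : ℕ) (P : Fin N → Set X),
      (∀ i, @IsLocallyClosed X t (P i)) →
      Pairwise (fun i j => Disjoint (P i) (P j)) →
      (⋃ i, P i) = Set.univ →
      χ X t = ∑ i, χ (P i) (TopologicalSpace.induced Subtype.val t)) :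
    χ (GrSpace r V) (grTopology d r V e) = (d.choose r : ℤ) := by
  classical
  letI t := grTopology d r V e
  set N := d.choose r with hN
  have hcard : Fintype.card {S : Finset (Fin d) // S.card = r} = N := by
    rw [Fintype.card_finset_len, Fintype.card_fin]
  set ι : {S : Finset (Fin d) // S.card = r} ≃ Fin N := Fintype.equivFinOfCardEq hcard with hι
  set sOf : {S : Finset (Fin d) // S.card = r} → (Fin r ↪o Fin d) :=
    fun S => S.1.orderEmbOfFin S.2 with hsOf
  set P : Fin N → Set (GrSpace r V) := fun n => St18.Cset e (sOf (ι.symm n)) with hP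
  have hloc : ∀ n, @IsLocallyClosed _ t (P n) := fun n => St18.Cset_locallyClosed e _
  have hdisj : Pairwise (fun i j => Disjoint (P i) (P j)) := by
    intro i j hij
    rw [Set.disjoint_left]
    intro x hxi hxj
    obtain ⟨A, hA, hAx⟩ := hxi
    obtain ⟨B, hB, hBx⟩ := hxj
    have hq : spanColumns d r V e A = spanColumns d r V e B := by rw [hAx, hBx]
    have hrange := (St18.q_eq_iff e A B).mp hq
    have h1 := St18.pivots_of_ech (hA : St18.Ech (sOf (ι.symm i)) A.1)
    have h2 := St18.pivots_of_ech (hB : St18.Ech (sOf (ι.symm j)) B.1)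
    rw [hrange] at h1
    have h3 : Set.range ⇑(sOf (ι.symm i)) = Set.range ⇑(sOf (ι.symm j)) := by
      rw [← h1, ← h2]
    have h4 : ((ι.symm i).1 : Set (Fin d)) = ((ι.symm j).1 : Set (Fin d)) := by
      rw [hsOf] at h3
      rwa [Finset.range_orderEmbOfFin, Finset.range_orderEmbOfFin] at h3
    have h5 : ι.symm i = ι.symm j := Subtype.ext (Finset.coe_injective h4)
    exact hij (by rw [← ι.apply_symm_apply i, h5, ι.apply_symm_apply])
  have hcover : (⋃ n, P n) = Set.univ := by
    rw [Set.eq_univ_iff_forall]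
    intro x
    set W' : Submodule ℂ (Fin d → ℂ) := Submodule.map (e : V →ₗ[ℂ] (Fin d → ℂ)) x.1 with hW'
    have hfin : finrank ℂ ↥W' = r := by
      rw [hW', LinearEquiv.finrank_map_eq]
      exact x.2
    set S : {S : Finset (Fin d) // S.card = r} := ⟨St18.pivots W', St18.card_pivots W' hfin⟩
      with hS
    have hs : Set.range ⇑(sOf S) = ↑(St18.pivots W') := Finset.range_orderEmbOfFin _ _
    obtain ⟨M, hMech, hMrange⟩ := St18.ech_exists W' hfin (sOf S) hs
    refine Set.mem_iUnion.mpr ⟨ι S, ?_⟩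
    have hPS : P (ι S) = St18.Cset e (sOf S) := by
      show St18.Cset e (sOf (ι.symm (ι S))) = St18.Cset e (sOf S)
      rw [ι.symm_apply_apply]
    rw [hPS]
    refine ⟨⟨M, hMech.rank_eq⟩, hMech, ?_⟩
    apply Subtype.ext
    show Submodule.map (e.symm : (Fin d → ℂ) →ₗ[ℂ] V) (LinearMap.range M.mulVecLin) = x.1
    rw [hMrange, hW', St18.map_symm_map]
  have hchi := hadd (GrSpace r V) t N P hloc hdisj hcover
  rw [hchi]
  have hone : ∀ n, χ (P n) (TopologicalSpace.induced Subtype.val t) = 1 := by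
    intro n
    apply hcell _ _ (St18.mdim (sOf (ι.symm n)))
    obtain ⟨h1⟩ := St18.cell_homeo e (sOf (ι.symm n))
    obtain ⟨h2⟩ := St18.zset_homeo (sOf (ι.symm n))
    exact ⟨h1.trans h2⟩
  rw [Finset.sum_congr rfl (fun n _ => hone n)]
  simp [hN]
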